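/- arXiv:2108.03804 — 2 statements merged into one kernel-verified Lean document; each statement's English description precedes it below -/
import Mathlib

section
/- Let D = [0, π) × [−R, R] with R > 0 and let B(x_t, t) = {(θ, r) ∈ D : x_t·cos(θ) − t < r < x_t·cos(θ) + t}. If x_t > 0, x_t + t > R and x_t − t ≤ R, then the Lebesgue measure of B(x_t, t) equals 2[πt − x_t·√(1 − ((R − t)/x_t)²) + (R − t)·arccos((R − t)/x_t)]. -/
/-!
Clipping to `[-R, R]` cuts from the band of width `2t` its overhangs above `R` and below `-R`,
so its width at `θ` is `2t - (x cos θ - (R - t))⁺ - (-x cos θ - (R - t))⁺`. The substitution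
`θ ↦ π - θ` shows that both overhangs have the same integral over `[0, π]`, and
`∫₀^π (x cos θ - d)⁺ dθ = x sin α - d α`, where `α = arccos (d / x)` is the angle at which the
overhang vanishes.
-/

open Real MeasureTheory

theorem min_sub_max_eq_sub_posPart (R t x : ℝ) :
    min R (x + t) - max (-R) (x - t) = 2 * t - (x - (R - t))⁺ - (-x - (R - t))⁺ := by
  simp only [posPart_def, max_def, min_def]
  split_ifs <;> linarith

theorem integral_comp_neg_cos (F : ℝ → ℝ) :
    ∫ θ in 0..π, F (-cos θ) = ∫ θ in 0..π, F (cos θ) := by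
  simpa [cos_pi_sub] using
    intervalIntegral.integral_comp_sub_left (a := 0) (b := π) (fun θ => F (cos θ)) π

theorem integral_mul_cos_sub (a d β : ℝ) :
    ∫ θ in 0..β, (a * cos θ - d) = a * sin β - d * β := by
  rw [intervalIntegral.integral_sub
      ((by fun_prop : Continuous fun θ => a * cos θ).intervalIntegrable _ _)
      intervalIntegrable_const,
    intervalIntegral.integral_const_mul, integral_cos, intervalIntegral.integral_const]
  simp [mul_comm]

theorem integral_posPart_mul_cos_sub_of_mem_Icc {a d : ℝ} (ha : 0 < a)
    (hd : d / a ∈ Set.Icc (-1) 1) :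
    ∫ θ in 0..π, (a * cos θ - d)⁺ = a * √(1 - (d / a) ^ 2) - d * arccos (d / a) := by
  set α := arccos (d / a)
  have hα0 : 0 ≤ α := arccos_nonneg _
  have hαπ : α ≤ π := arccos_le_pi _
  have hcos : a * cos α = d := by rw [cos_arccos hd.1 hd.2]; field_simp
  have hint : ∀ u v, IntervalIntegrable (fun θ => (a * cos θ - d)⁺) volume u v :=
    fun u v => (by fun_prop : Continuous fun θ => (a * cos θ - d)⁺).intervalIntegrable u v
  have hleft : ∫ θ in 0..α, (a * cos θ - d)⁺ = ∫ θ in 0..α, (a * cos θ - d) := by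
    refine intervalIntegral.integral_congr fun θ hθ => posPart_eq_self.2 ?_
    rw [Set.uIcc_of_le hα0] at hθ
    have := cos_le_cos_of_nonneg_of_le_pi hθ.1 hαπ hθ.2
    nlinarith
  have hright : ∫ θ in α..π, (a * cos θ - d)⁺ = ∫ θ in α..π, (0 : ℝ) := by
    refine intervalIntegral.integral_congr fun θ hθ => posPart_eq_zero.2 ?_
    rw [Set.uIcc_of_le hαπ] at hθ
    have := cos_le_cos_of_nonneg_of_le_pi hα0 hθ.2 hθ.1
    nlinarith
  rw [← intervalIntegral.integral_add_adjacent_intervals (hint 0 α) (hint α π), hleft, hright,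
    intervalIntegral.integral_zero, add_zero, integral_mul_cos_sub, sin_arccos]

/-- Outside `[-1, 1]`, `arccos` saturates at `0` or `π` and the square root of a negative
number is `0`, which is exactly what the formula needs there. -/
theorem integral_posPart_mul_cos_sub {a : ℝ} (ha : 0 < a) (d : ℝ) :
    ∫ θ in 0..π, (a * cos θ - d)⁺ = a * √(1 - (d / a) ^ 2) - d * arccos (d / a) := by
  rcases lt_or_ge (d / a) (-1) with hlow | hge
  · have hd : d < -a := by rwa [div_lt_iff₀ ha, neg_one_mul] at hlow
    have hsqrt : √(1 - (d / a) ^ 2) = 0 := sqrt_eq_zero'.2 (by nlinarith)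
    rw [hsqrt, arccos_eq_pi.2 hlow.le,
      intervalIntegral.integral_congr (g := fun θ => a * cos θ - d)
        fun θ _ => posPart_eq_self.2 (by nlinarith [neg_one_le_cos θ]),
      integral_mul_cos_sub, sin_pi]
  rcases le_or_gt (d / a) 1 with hle | hhigh
  · exact integral_posPart_mul_cos_sub_of_mem_Icc ha ⟨hge, hle⟩
  · have hd : a < d := by rwa [one_lt_div ha] at hhigh
    have hsqrt : √(1 - (d / a) ^ 2) = 0 := sqrt_eq_zero'.2 (by nlinarith)
    rw [hsqrt, arccos_eq_zero.2 hhigh.le, intervalIntegral.integral_congr (g := fun _ => (0 : ℝ))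
      fun θ _ => posPart_eq_zero.2 (by nlinarith [cos_le_one θ])]
    simp

theorem volume_clipped_band_eq_integral {u : ℝ → ℝ} (hu : Continuous u) {R t a b : ℝ}
    (hR : 0 ≤ R) (ht : 0 ≤ t) (hab : a ≤ b) (hbound : ∀ θ ∈ Set.Ico a b, |u θ| ≤ R + t) :
    volume {p : ℝ × ℝ | p.1 ∈ Set.Ico a b ∧ p.2 ∈ Set.Icc (-R) R ∧
      p.2 ∈ Set.Ioo (u p.1 - t) (u p.1 + t)} =
      ENNReal.ofReal (∫ θ in a..b, (2 * t - (u θ - (R - t))⁺ - (-u θ - (R - t))⁺)) := by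
  set f := fun θ => max (-R) (u θ - t)
  set g := fun θ => min R (u θ + t)
  have hsub : regionBetween f g (Set.Ico a b) ⊆ {p : ℝ × ℝ | p.1 ∈ Set.Ico a b ∧
      p.2 ∈ Set.Icc (-R) R ∧ p.2 ∈ Set.Ioo (u p.1 - t) (u p.1 + t)} := by
    rintro ⟨θ, r⟩ ⟨hθ, hf, hg⟩
    obtain ⟨hR₁, ht₁⟩ := max_lt_iff.1 hf
    obtain ⟨hR₂, ht₂⟩ := lt_min_iff.1 hg
    exact ⟨hθ, ⟨hR₁.le, hR₂.le⟩, ht₁, ht₂⟩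
  have hsup : {p : ℝ × ℝ | p.1 ∈ Set.Ico a b ∧ p.2 ∈ Set.Icc (-R) R ∧
      p.2 ∈ Set.Ioo (u p.1 - t) (u p.1 + t)} ⊆
      regionBetween f g (Set.Ico a b) ∪ Set.univ ×ˢ {-R, R} := by
    rintro ⟨θ, r⟩ ⟨hθ, ⟨hR₁, hR₂⟩, ht₁, ht₂⟩
    rcases hR₁.eq_or_lt with h₁ | h₁
    · exact Or.inr ⟨trivial, Or.inl h₁.symm⟩
    rcases hR₂.lt_or_eq with h₂ | h₂
    · exact Or.inl ⟨hθ, max_lt h₁ ht₁, lt_min h₂ ht₂⟩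
    · exact Or.inr ⟨trivial, Or.inr h₂⟩
  have hnull : volume ((Set.univ : Set ℝ) ×ˢ ({-R, R} : Set ℝ)) = 0 := by
    rw [Measure.volume_eq_prod, Measure.prod_prod, (Set.toFinite {-R, R}).measure_zero, mul_zero]
  have hfg : ∀ θ ∈ Set.Ico a b, f θ ≤ g θ := fun θ hθ => by
    have := abs_le.1 (hbound θ hθ)
    exact max_le (le_min (by linarith) (by linarith)) (le_min (by linarith) (by linarith))
  have hint : ∀ h : ℝ → ℝ, Continuous h → IntegrableOn h (Set.Ico a b) :=
    fun h hh => hh.integrableOn_Icc.mono_set Set.Ico_subset_Icc_self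
  calc _ = volume (regionBetween f g (Set.Ico a b)) :=
        le_antisymm ((measure_mono hsup).trans <| (measure_union_le _ _).trans <| by
          rw [hnull, add_zero]) (measure_mono hsub)
    _ = _ := by
      rw [Measure.volume_eq_prod, volume_regionBetween_eq_integral (hint f (by fun_prop))
        (hint g (by fun_prop)) measurableSet_Ico hfg, setIntegral_congr_set Ico_ae_eq_Ioc,
        ← intervalIntegral.integral_of_le hab]
      simp only [f, g, Pi.sub_apply, min_sub_max_eq_sub_posPart]

theorem blp_band_area_case2_general (R xt t : ℝ) (hR : 0 < R) (ht : 0 < t) (hxt : 0 < xt)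
    (hcase2 : xt - t ≤ R) :
    volume {p : ℝ × ℝ | p.1 ∈ Set.Ico 0 π ∧ p.2 ∈ Set.Icc (-R) R ∧
      p.2 ∈ Set.Ioo (xt * Real.cos p.1 - t) (xt * Real.cos p.1 + t)} =
      ENNReal.ofReal (2 * (π * t - xt * Real.sqrt (1 - ((R - t) / xt) ^ 2) +
        (R - t) * Real.arccos ((R - t) / xt))) := by
  have hbound : ∀ θ ∈ Set.Ico 0 π, |xt * cos θ| ≤ R + t := fun θ _ => by
    rw [abs_mul, abs_of_pos hxt]
    nlinarith [abs_cos_le_one θ]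
  have hreflect : ∫ θ in 0..π, (-(xt * cos θ) - (R - t))⁺ =
      ∫ θ in 0..π, (xt * cos θ - (R - t))⁺ := by
    simpa [mul_neg] using integral_comp_neg_cos fun y => (xt * y - (R - t))⁺
  rw [volume_clipped_band_eq_integral (by fun_prop) hR.le ht.le pi_pos.le hbound,
    intervalIntegral.integral_sub, intervalIntegral.integral_sub, intervalIntegral.integral_const,
    hreflect, integral_posPart_mul_cos_sub hxt]
  · rw [sub_zero, smul_eq_mul]
    congr 1
    ring
  all_goals exact Continuous.intervalIntegrable (by fun_prop) _ _

/-- Case 2 of Theorem 1: if x_t + t > R and x_t − t ≤ R (with 0 < t < R, t ≤ x_t), the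
clipped domain band has Lebesgue measure
2[πt − x_t √(1 − ((R−t)/x_t)²) + (R−t) arccos((R−t)/x_t)]. -/
theorem blp_band_area_case2 (R xt t : ℝ) (hR : 0 < R) (ht : 0 < t) (hxt : 0 < xt)
    (htR : t < R) (htxt : t ≤ xt) (hcase1 : R < xt + t) (hcase2 : xt - t ≤ R) :
    volume {p : ℝ × ℝ | p.1 ∈ Set.Ico 0 π ∧ p.2 ∈ Set.Icc (-R) R ∧
      p.2 ∈ Set.Ioo (xt * Real.cos p.1 - t) (xt * Real.cos p.1 + t)} =
      ENNReal.ofReal (2 * (π * t - xt * Real.sqrt (1 - ((R - t) / xt) ^ 2) +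
        (R - t) * Real.arccos ((R - t) / xt))) :=
  blp_band_area_case2_general R xt t hR ht hxt hcase2
end

section
/- Let D = [0, π) × [−R, R] with R > 0 and let B(x_t, t) = {(θ, r) ∈ D : x_t·cos(θ) − t < r < x_t·cos(θ) + t}. If x_t > 0 and x_t − t > R, then the Lebesgue measure of B(x_t, t) equals 2[πt − x_t(√(1 − ((R − t)/x_t)²) − √(1 − ((R + t)/x_t)²)) + (R − t)·arccos((R − t)/x_t) − (R + t)·arccos((R + t)/x_t)]. -/
/-!
Slicing at fixed `θ`, the band has length `w(xt cos θ)`, where `w(c) = overlapLength R t c`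
is the length of `[-R, R] ∩ (c - t, c + t)`. Since `w` is even and `cos (π - θ) = -cos θ`,
the area is twice the integral over `[0, π/2]`. There `xt cos θ` decreases from `xt > R + t`
to `0`, so `w` vanishes on `[0, arccos ((R + t) / xt)]`, equals `R + t - xt cos θ` up to
`arccos ((R - t) / xt)`, and is `2t` after that; each piece integrates in closed form, using
`sin (arccos x) = √(1 - x²)`.
-/

open Real MeasureTheory Set

theorem volume_Icc_inter_Ioo (a b c d : ℝ) :
    volume (Icc a b ∩ Ioo c d) = ENNReal.ofReal (min b d - max a c) := by
  refine le_antisymm ?_ ?_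
  · calc volume (Icc a b ∩ Ioo c d) ≤ volume (Icc (max a c) (min b d)) :=
          measure_mono fun x ⟨⟨hax, hxb⟩, hcx, hxd⟩ =>
            ⟨max_le hax hcx.le, le_min hxb hxd.le⟩
      _ = _ := Real.volume_Icc
  · calc ENNReal.ofReal (min b d - max a c) = volume (Ioo (max a c) (min b d)) :=
          Real.volume_Ioo.symm
      _ ≤ volume (Icc a b ∩ Ioo c d) := measure_mono fun x ⟨hx₁, hx₂⟩ =>
          ⟨⟨(le_max_left a c).trans hx₁.le, hx₂.le.trans (min_le_left b d)⟩,
            (le_max_right a c).trans_lt hx₁, hx₂.trans_le (min_le_right b d)⟩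

theorem volume_setOf_mem_Icc_inter_Ioo {A : Set ℝ} (hA : MeasurableSet A) (a b : ℝ)
    {l u : ℝ → ℝ} (hl : Measurable l) (hu : Measurable u) :
    volume {p : ℝ × ℝ | p.1 ∈ A ∧ p.2 ∈ Icc a b ∧ p.2 ∈ Ioo (l p.1) (u p.1)} =
      ∫⁻ x in A, ENNReal.ofReal (min b (u x) - max a (l x)) := by
  have hmeas : MeasurableSet
      {p : ℝ × ℝ | p.1 ∈ A ∧ p.2 ∈ Icc a b ∧ p.2 ∈ Ioo (l p.1) (u p.1)} :=
    (measurable_fst hA).inter <| (measurable_snd measurableSet_Icc).inter <|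
      (measurableSet_lt (hl.comp measurable_fst) measurable_snd).inter
        (measurableSet_lt measurable_snd (hu.comp measurable_fst))
  rw [Measure.volume_eq_prod, Measure.prod_apply hmeas, ← lintegral_indicator hA]
  congr 1 with x
  by_cases hx : x ∈ A
  · simp only [indicator_of_mem hx, ← volume_Icc_inter_Ioo]
    congr 1 with y
    simp [hx]
  · simp [hx]

theorem setLIntegral_Ico_ofReal {f : ℝ → ℝ} (hf : Continuous f) {a b : ℝ} (hab : a ≤ b) :
    ∫⁻ x in Ico a b, ENNReal.ofReal (f x) = ENNReal.ofReal (∫ x in a..b, max (f x) 0) := by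
  rw [intervalIntegral.integral_of_le hab, ← setIntegral_congr_set Ico_ae_eq_Ioc,
    ofReal_integral_eq_lintegral_ofReal
      ((hf.max continuous_const).integrableOn_Icc.mono_set Ico_subset_Icc_self)
      (Filter.Eventually.of_forall fun x => le_max_right (f x) 0)]
  simp [ENNReal.ofReal_max]

theorem integral_comp_cos_eq_two_mul {F : ℝ → ℝ} (hF : Continuous F)
    (heven : ∀ c, F (-c) = F c) :
    ∫ θ in 0..π, F (cos θ) = 2 * ∫ θ in 0..π / 2, F (cos θ) := by
  have hint : ∀ u v : ℝ, IntervalIntegrable (fun θ => F (cos θ)) volume u v :=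
    fun u v => (hF.comp continuous_cos).intervalIntegrable u v
  have hreflect : ∫ θ in π / 2..π, F (cos θ) = ∫ θ in 0..π / 2, F (cos θ) := by
    simpa [cos_pi_sub, heven, show π - π / 2 = π / 2 by ring] using
      (intervalIntegral.integral_comp_sub_left (fun θ => F (cos θ)) π
        (a := 0) (b := π / 2)).symm
  rw [← intervalIntegral.integral_add_adjacent_intervals (hint 0 (π / 2)) (hint (π / 2) π),
    hreflect, two_mul]

def overlapLength (R t c : ℝ) : ℝ := max (min R (c + t) - max (-R) (c - t)) 0

section overlapLength

variable {R t c : ℝ}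

theorem overlapLength_neg : overlapLength R t (-c) = overlapLength R t c := by
  have hmin : min R (-c + t) = -max (-R) (c - t) := by
    rw [← min_neg_neg, neg_neg, neg_sub, neg_add_eq_sub]
  have hmax : max (-R) (-c - t) = -min R (c + t) := by
    rw [← max_neg_neg, neg_add']
  rw [overlapLength, overlapLength, hmin, hmax, neg_sub_neg]

theorem continuous_overlapLength : Continuous (overlapLength R t) := by
  unfold overlapLength; fun_prop

theorem overlapLength_eq_zero (h : R + t ≤ c) : overlapLength R t c = 0 :=
  max_eq_right (by linarith [min_le_left R (c + t), le_max_right (-R) (c - t)])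

theorem overlapLength_eq_sub (htR : t ≤ R) (h₁ : R - t ≤ c) (h₂ : c ≤ R + t) :
    overlapLength R t c = R + t - c := by
  rw [overlapLength, min_eq_left (by linarith), max_eq_right (a := -R) (by linarith),
    max_eq_left (by linarith)]
  ring

theorem overlapLength_eq_two_mul (ht : 0 ≤ t) (h : |c| ≤ R - t) :
    overlapLength R t c = 2 * t := by
  obtain ⟨h₁, h₂⟩ := abs_le.mp h
  rw [overlapLength, min_eq_right (by linarith), max_eq_right (a := -R) (by linarith),
    max_eq_left (by linarith)]
  ring

end overlapLength

theorem mul_cos_arccos_div {x y : ℝ} (hx : 0 < x) (h : |y| ≤ x) :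
    x * cos (arccos (y / x)) = y := by
  obtain ⟨h₁, h₂⟩ := abs_le.mp h
  rw [cos_arccos ((le_div_iff₀ hx).mpr (by linarith)) ((div_le_one hx).mpr h₂)]
  field_simp

theorem integral_overlapLength_mul_cos {R t xt : ℝ} (ht : 0 ≤ t) (htR : t ≤ R)
    (hxt : R + t < xt) :
    ∫ θ in 0..π / 2, overlapLength R t (xt * cos θ) =
      π * t - xt * (√(1 - ((R - t) / xt) ^ 2) - √(1 - ((R + t) / xt) ^ 2)) +
        (R - t) * arccos ((R - t) / xt) - (R + t) * arccos ((R + t) / xt) := by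
  have hxt₀ : 0 < xt := by linarith
  set a := arccos ((R + t) / xt)
  set b := arccos ((R - t) / xt)
  have hcos_a : xt * cos a = R + t :=
    mul_cos_arccos_div hxt₀ (abs_le.mpr ⟨by linarith, hxt.le⟩)
  have hcos_b : xt * cos b = R - t :=
    mul_cos_arccos_div hxt₀ (abs_le.mpr ⟨by linarith, by linarith⟩)
  have ha : 0 ≤ a := arccos_nonneg _
  have hab : a ≤ b := arccos_le_arccos (div_le_div_of_nonneg_right (by linarith) hxt₀.le)
  have hb : b ≤ π / 2 := arccos_le_pi_div_two.mpr (div_nonneg (by linarith) hxt₀.le)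
  have hmono : ∀ {θ φ : ℝ}, 0 ≤ θ → φ ≤ π → θ ≤ φ →
      xt * cos φ ≤ xt * cos θ :=
    fun h₀ hπ hθφ =>
      mul_le_mul_of_nonneg_left (cos_le_cos_of_nonneg_of_le_pi h₀ hπ hθφ) hxt₀.le
  have hint : ∀ u v : ℝ,
      IntervalIntegrable (fun θ => overlapLength R t (xt * cos θ)) volume u v :=
    fun u v => (continuous_overlapLength.comp (by fun_prop)).intervalIntegrable u v
  have I₁ : ∫ θ in 0..a, overlapLength R t (xt * cos θ) = 0 := by
    rw [intervalIntegral.integral_congr (g := fun _ => 0), intervalIntegral.integral_zero]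
    intro θ hθ
    rw [uIcc_of_le ha] at hθ
    exact overlapLength_eq_zero (hcos_a ▸ hmono hθ.1 (by linarith) hθ.2)
  have I₂ : ∫ θ in a..b, overlapLength R t (xt * cos θ) =
      (R + t) * (b - a) - xt * (sin b - sin a) := by
    rw [intervalIntegral.integral_congr (g := fun θ => (R + t) - xt * cos θ),
      intervalIntegral.integral_sub intervalIntegrable_const
        ((by fun_prop : Continuous fun θ => xt * cos θ).intervalIntegrable a b),
      intervalIntegral.integral_const, intervalIntegral.integral_const_mul, integral_cos,
      smul_eq_mul, mul_comm]
    intro θ hθ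
    rw [uIcc_of_le hab] at hθ
    exact overlapLength_eq_sub htR (hcos_b ▸ hmono (ha.trans hθ.1) (by linarith [pi_pos]) hθ.2)
      (hcos_a ▸ hmono ha (by linarith [hθ.2, pi_pos]) hθ.1)
  have I₃ : ∫ θ in b..π / 2, overlapLength R t (xt * cos θ) = 2 * t * (π / 2 - b) := by
    rw [intervalIntegral.integral_congr (g := fun _ => 2 * t), intervalIntegral.integral_const,
      smul_eq_mul, mul_comm]
    intro θ hθ
    rw [uIcc_of_le hb] at hθ
    have hnonneg : 0 ≤ xt * cos θ :=
      mul_nonneg hxt₀.le (cos_nonneg_of_mem_Icc ⟨by linarith [hθ.1, pi_pos], hθ.2⟩)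
    have hle : xt * cos θ ≤ R - t :=
      hcos_b ▸ hmono (ha.trans hab) (by linarith [hθ.2, pi_pos]) hθ.1
    exact overlapLength_eq_two_mul ht (abs_le.mpr ⟨by linarith, hle⟩)
  rw [← intervalIntegral.integral_add_adjacent_intervals (hint 0 a) (hint a (π / 2)),
    ← intervalIntegral.integral_add_adjacent_intervals (hint a b) (hint b (π / 2)),
    I₁, I₂, I₃, sin_arccos, sin_arccos]
  ring

theorem blp_band_area_case3_general (R xt t : ℝ) (ht : 0 < t)
    (htR : t < R) (hcase : R < xt - t) :
    volume {p : ℝ × ℝ | p.1 ∈ Set.Ico 0 π ∧ p.2 ∈ Set.Icc (-R) R ∧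
      p.2 ∈ Set.Ioo (xt * Real.cos p.1 - t) (xt * Real.cos p.1 + t)} =
      ENNReal.ofReal (2 * (π * t -
        xt * (Real.sqrt (1 - ((R - t) / xt) ^ 2) - Real.sqrt (1 - ((R + t) / xt) ^ 2)) +
        (R - t) * Real.arccos ((R - t) / xt) -
        (R + t) * Real.arccos ((R + t) / xt))) := by
  rw [volume_setOf_mem_Icc_inter_Ioo measurableSet_Ico (-R) R (l := fun θ => xt * cos θ - t)
      (u := fun θ => xt * cos θ + t) (by fun_prop) (by fun_prop),
    setLIntegral_Ico_ofReal (by fun_prop) pi_pos.le]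
  congr 1
  change ∫ θ in 0..π, overlapLength R t (xt * cos θ) = _
  rw [integral_comp_cos_eq_two_mul (F := fun c => overlapLength R t (xt * c))
      (continuous_overlapLength.comp (by fun_prop)) fun c => by rw [mul_neg, overlapLength_neg],
    integral_overlapLength_mul_cos ht.le htR.le (by linarith)]

/-- Case 3 of Theorem 1: if x_t − t > R (with 0 < t < R), the clipped domain band has
Lebesgue measure
2[πt − x_t(√(1 − ((R−t)/x_t)²) − √(1 − ((R+t)/x_t)²)) + (R−t) arccos((R−t)/x_t)
  − (R+t) arccos((R+t)/x_t)]. -/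
theorem blp_band_area_case3 (R xt t : ℝ) (hR : 0 < R) (ht : 0 < t) (hxt : 0 < xt)
    (htR : t < R) (hcase : R < xt - t) :
    volume {p : ℝ × ℝ | p.1 ∈ Set.Ico 0 π ∧ p.2 ∈ Set.Icc (-R) R ∧
      p.2 ∈ Set.Ioo (xt * Real.cos p.1 - t) (xt * Real.cos p.1 + t)} =
      ENNReal.ofReal (2 * (π * t -
        xt * (Real.sqrt (1 - ((R - t) / xt) ^ 2) - Real.sqrt (1 - ((R + t) / xt) ^ 2)) +
        (R - t) * Real.arccos ((R - t) / xt) -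
        (R + t) * Real.arccos ((R + t) / xt))) :=
  blp_band_area_case3_general R xt t ht htR hcase
end
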